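/- Greedy multiplicative spanner guarantee: process the edges of a weighted graph G in non-decreasing order of weight; add edge (u,v) of weight w to G' only if currently d_{G'}(u,v) > α·w, with α ≥ 1. Then the resulting G' is an α-multiplicative spanner: d_{G'}(u,v) ≤ α·d_G(u,v) for all vertices u, v. -/

import Mathlib

open scoped ENNReal

structure WGraph (V : Type*) where
  Adj : V → V → Prop
  w : V → V → ℝ≥0∞

namespace WGraph

variable {V : Type*}

/-- Total weight of a walk starting at `u` with remaining vertex list `l`. -/
noncomputable def walkWeight (w : V → V → ℝ≥0∞) (u : V) (l : List V) : ℝ≥0∞ :=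
  (((u :: l).zip l).map fun p => w p.1 p.2).sum

/-- `l` is the (tail of the) vertex list of a walk from `u` to `v`. -/
def IsWalk (G : WGraph V) (u v : V) (l : List V) : Prop :=
  List.Chain G.Adj u l ∧ (u :: l).getLast (List.cons_ne_nil u l) = v

/-- Shortest-path distance: infimum of walk weights (`⊤` if no walk exists). -/
noncomputable def dist (G : WGraph V) (u v : V) : ℝ≥0∞ :=
  ⨅ l ∈ {l : List V | G.IsWalk u v l}, walkWeight G.w u l

/-- `G'` is a subgraph of `G` with inherited edge weights. -/
def IsSubgraph (G' G : WGraph V) : Prop :=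
  (∀ u v, G'.Adj u v → G.Adj u v) ∧ ∀ u v, G'.Adj u v → G'.w u v = G.w u v

/-- The (undirected) edge `{a, b}` appears among consecutive pairs of the walk. -/
def edgeInWalk (u : V) (l : List V) (a b : V) : Prop :=
  (a, b) ∈ (u :: l).zip l ∨ (b, a) ∈ (u :: l).zip l

/-- Vertices touched by some edge of `G`. -/
def support (G : WGraph V) : Set V := {v | ∃ u, G.Adj v u ∨ G.Adj u v}

end WGraph

open WGraph

open scoped Classical

/-- Add the (undirected) edge `e` to `R`, weights inherited from `G`. -/
def WGraph.addEdge {V : Type*} (G R : WGraph V) (e : V × V) : WGraph V :=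
  ⟨fun a b => R.Adj a b ∨ (a, b) = e ∨ (b, a) = e, G.w⟩

/-- One step of the greedy spanner algorithm: add edge `e` only if the current
distance between its endpoints exceeds `α` times its weight. -/
noncomputable def WGraph.greedyStep {V : Type*} (G : WGraph V) (α : ℝ≥0∞)
    (R : WGraph V) (e : V × V) : WGraph V :=
  if α * G.w e.1 e.2 < R.dist e.1 e.2 then G.addEdge R e else R

/-- The greedy spanner obtained by processing the edge list `L` in order,
starting from the empty graph. -/
noncomputable def WGraph.greedy {V : Type*} (G : WGraph V) (α : ℝ≥0∞)
    (L : List (V × V)) : WGraph V :=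
  L.foldl (G.greedyStep α) ⟨fun _ _ => False, G.w⟩

/-!
Once the greedy algorithm has processed an edge `e`, the current spanner satisfies
`d(e) ≤ α·w(e)`: either `e` was added, or it was rejected because `d(e) ≤ α·w(e)` already held.
Later steps only add edges, so distances only shrink and the bound survives to the end. Chaining
the bound along the edges of any walk with the triangle inequality gives `d' ≤ α·d`; when
`α = ⊤` this needs `d(u, v) ≠ 0` for `u ≠ v`, which holds as the finitely many edge weights are
positive.
-/

namespace WGraph

variable {V : Type*} {G R R' : WGraph V} {α : ℝ≥0∞} {u v x : V} {l : List V}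

section Walks

lemma walkWeight_cons (w : V → V → ℝ≥0∞) (u x : V) (l : List V) :
    walkWeight w u (x :: l) = w u x + walkWeight w x l := by
  simp [walkWeight]

lemma isWalk_nil (G : WGraph V) (u : V) : G.IsWalk u u [] := ⟨List.isChain_singleton u, rfl⟩

lemma IsWalk.eq_of_nil (h : G.IsWalk u v []) : u = v := h.2

lemma isWalk_cons_iff : G.IsWalk u v (x :: l) ↔ G.Adj u x ∧ G.IsWalk x v l := by
  rw [IsWalk, IsWalk, List.getLast_cons (List.cons_ne_nil x l), ← and_assoc]
  exact Iff.and List.isChain_cons_cons Iff.rfl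

lemma dist_le_walkWeight (h : G.IsWalk u v l) : G.dist u v ≤ walkWeight G.w u l :=
  iInf₂_le l h

lemma dist_eq_iInf (G : WGraph V) (u v : V) :
    G.dist u v = ⨅ l : {l : List V // G.IsWalk u v l}, walkWeight G.w u l :=
  (iInf_subtype'' _ _).symm

lemma dist_self (G : WGraph V) (u : V) : G.dist u u = 0 :=
  nonpos_iff_eq_zero.1 (dist_le_walkWeight (isWalk_nil G u))

lemma dist_le_w (h : G.Adj u v) : G.dist u v ≤ G.w u v := by
  simpa [walkWeight_cons, walkWeight] using
    dist_le_walkWeight (isWalk_cons_iff.2 ⟨h, isWalk_nil G v⟩)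

lemma dist_le_w_add_dist (h : G.Adj u x) (v : V) : G.dist u v ≤ G.w u x + G.dist x v := by
  rw [dist_eq_iInf G x v, ENNReal.add_iInf]
  refine le_iInf fun l => ?_
  rw [← walkWeight_cons]
  exact dist_le_walkWeight (isWalk_cons_iff.2 ⟨h, l.2⟩)

lemma dist_le_walkWeight_add_dist {m : V} (h : G.IsWalk u m l) (v : V) :
    G.dist u v ≤ walkWeight G.w u l + G.dist m v := by
  induction l generalizing u with
  | nil => simp [h.eq_of_nil, walkWeight]
  | cons x l ih =>
    obtain ⟨hux, hxm⟩ := isWalk_cons_iff.1 h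
    calc G.dist u v ≤ G.w u x + G.dist x v := dist_le_w_add_dist hux v
      _ ≤ G.w u x + (walkWeight G.w x l + G.dist m v) := by gcongr; exact ih hxm
      _ = walkWeight G.w u (x :: l) + G.dist m v := by rw [walkWeight_cons, add_assoc]

lemma dist_triangle (G : WGraph V) (u m v : V) : G.dist u v ≤ G.dist u m + G.dist m v := by
  rw [dist_eq_iInf G u m, ENNReal.iInf_add]
  exact le_iInf fun l => dist_le_walkWeight_add_dist l.2 v

lemma dist_le_mul_walkWeight (hedge : ∀ a b, G.Adj a b → R.dist a b ≤ α * G.w a b)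
    (h : G.IsWalk u v l) : R.dist u v ≤ α * walkWeight G.w u l := by
  induction l generalizing u with
  | nil => simp [h.eq_of_nil, dist_self]
  | cons x l ih =>
    obtain ⟨hux, hxv⟩ := isWalk_cons_iff.1 h
    calc R.dist u v ≤ R.dist u x + R.dist x v := dist_triangle R u x v
      _ ≤ α * G.w u x + α * walkWeight G.w x l := add_le_add (hedge u x hux) (ih hxv)
      _ = α * walkWeight G.w u (x :: l) := by rw [walkWeight_cons, mul_add]

lemma dist_le_mul_dist (hedge : ∀ a b, G.Adj a b → R.dist a b ≤ α * G.w a b) (hα : α ≠ 0)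
    (hd : G.dist u v ≠ 0) : R.dist u v ≤ α * G.dist u v := by
  rcases eq_or_ne α ⊤ with rfl | hαt
  · simp [ENNReal.top_mul hd]
  rw [dist_eq_iInf G u v, ENNReal.mul_iInf_of_ne hα hαt]
  exact le_iInf fun l => dist_le_mul_walkWeight hedge l.2

lemma dist_comm (hsymm : ∀ a b, G.Adj a b → G.Adj b a) (hwsymm : ∀ a b, G.w a b = G.w b a)
    (u v : V) : G.dist u v = G.dist v u := by
  have dist_le_walkWeight_rev : ∀ {u v : V} {l : List V}, G.IsWalk v u l →
      G.dist u v ≤ walkWeight G.w v l := by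
    intro u v l h
    induction l generalizing v with
    | nil => simp [h.eq_of_nil, dist_self]
    | cons x l ih =>
      obtain ⟨hvx, hxu⟩ := isWalk_cons_iff.1 h
      calc G.dist u v ≤ G.dist u x + G.dist x v := dist_triangle G u x v
        _ ≤ walkWeight G.w x l + G.w v x := by
          gcongr
          · exact ih hxu
          · rw [hwsymm]; exact dist_le_w (hsymm v x hvx)
        _ = walkWeight G.w v (x :: l) := by rw [walkWeight_cons, add_comm]
  exact le_antisymm (le_iInf₂ fun l => dist_le_walkWeight_rev)
    (le_iInf₂ fun l => dist_le_walkWeight_rev)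

lemma dist_le_dist_of_adj_imp (hadj : ∀ a b, R.Adj a b → R'.Adj a b) (hw : R'.w = R.w)
    (u v : V) : R'.dist u v ≤ R.dist u v :=
  le_iInf₂ fun l hl => by
    rw [← hw]
    exact dist_le_walkWeight ⟨List.IsChain.imp (fun a b h => hadj a b h) hl.1, hl.2⟩

lemma le_dist_of_ne {c : ℝ≥0∞} (hc : ∀ a b, G.Adj a b → c ≤ G.w a b) (huv : u ≠ v) :
    c ≤ G.dist u v := by
  refine le_iInf₂ fun l hl => ?_
  cases l with
  | nil => exact absurd hl.eq_of_nil huv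
  | cons x l =>
    rw [walkWeight_cons]
    exact (hc u x (isWalk_cons_iff.1 hl).1).trans le_self_add

end Walks

section Greedy

variable {e : V × V} {L : List (V × V)}

lemma greedyStep_w (hR : R.w = G.w) : (G.greedyStep α R e).w = G.w := by
  unfold greedyStep
  split_ifs
  exacts [rfl, hR]

lemma greedyStep_adj_of_adj {a b : V} (h : R.Adj a b) : (G.greedyStep α R e).Adj a b := by
  unfold greedyStep
  split_ifs
  exacts [Or.inl h, h]

lemma greedyStep_adj_symm (hR : ∀ a b, R.Adj a b → R.Adj b a) (a b : V) :
    (G.greedyStep α R e).Adj a b → (G.greedyStep α R e).Adj b a := by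
  unfold greedyStep
  split_ifs
  · rintro (h | h | h)
    exacts [Or.inl (hR a b h), Or.inr (Or.inr h), Or.inr (Or.inl h)]
  · exact hR a b

lemma dist_greedyStep_le_dist (hR : R.w = G.w) (u v : V) :
    (G.greedyStep α R e).dist u v ≤ R.dist u v :=
  dist_le_dist_of_adj_imp (fun _ _ => greedyStep_adj_of_adj) (greedyStep_w hR ▸ hR.symm) u v

lemma dist_greedyStep_le (hα : 1 ≤ α) : (G.greedyStep α R e).dist e.1 e.2 ≤ α * G.w e.1 e.2 := by
  unfold greedyStep
  split_ifs with hadd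
  · calc (G.addEdge R e).dist e.1 e.2 ≤ G.w e.1 e.2 := dist_le_w (Or.inr (Or.inl rfl))
      _ ≤ α * G.w e.1 e.2 := le_mul_of_one_le_left' hα
  · exact not_lt.1 hadd

lemma foldl_greedyStep_w (hR : R.w = G.w) : (L.foldl (G.greedyStep α) R).w = G.w := by
  induction L generalizing R with
  | nil => exact hR
  | cons e L ih => exact ih (greedyStep_w hR)

lemma foldl_greedyStep_adj_symm (hR : ∀ a b, R.Adj a b → R.Adj b a) (a b : V) :
    (L.foldl (G.greedyStep α) R).Adj a b → (L.foldl (G.greedyStep α) R).Adj b a := by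
  induction L generalizing R with
  | nil => exact hR a b
  | cons e L ih => exact ih (greedyStep_adj_symm hR)

lemma dist_foldl_greedyStep_le_dist (hR : R.w = G.w) (u v : V) :
    (L.foldl (G.greedyStep α) R).dist u v ≤ R.dist u v := by
  induction L generalizing R with
  | nil => exact le_rfl
  | cons e L ih => exact (ih (greedyStep_w hR)).trans (dist_greedyStep_le_dist hR u v)

lemma dist_foldl_greedyStep_le (hα : 1 ≤ α) (hR : R.w = G.w) (he : e ∈ L) :
    (L.foldl (G.greedyStep α) R).dist e.1 e.2 ≤ α * G.w e.1 e.2 := by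
  induction L generalizing R with
  | nil => exact absurd he List.not_mem_nil
  | cons f L ih =>
    rcases List.mem_cons.1 he with rfl | he
    · exact (dist_foldl_greedyStep_le_dist (greedyStep_w hR) _ _).trans (dist_greedyStep_le hα)
    · exact ih (greedyStep_w hR) he

lemma greedy_w : (G.greedy α L).w = G.w := foldl_greedyStep_w rfl

lemma greedy_adj_symm (a b : V) : (G.greedy α L).Adj a b → (G.greedy α L).Adj b a :=
  foldl_greedyStep_adj_symm (fun _ _ => False.elim) a b

lemma dist_greedy_le_of_mem (hα : 1 ≤ α) (he : e ∈ L) :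
    (G.greedy α L).dist e.1 e.2 ≤ α * G.w e.1 e.2 :=
  dist_foldl_greedyStep_le hα rfl he

lemma dist_greedy_le_of_adj (hα : 1 ≤ α) (hwsymm : ∀ a b, G.w a b = G.w b a)
    (hall : ∀ a b, G.Adj a b → (a, b) ∈ L ∨ (b, a) ∈ L) (a b : V) (hab : G.Adj a b) :
    (G.greedy α L).dist a b ≤ α * G.w a b := by
  rcases hall a b hab with h | h
  · exact dist_greedy_le_of_mem (e := (a, b)) hα h
  · rw [dist_comm greedy_adj_symm (by rw [greedy_w]; exact hwsymm), hwsymm]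
    exact dist_greedy_le_of_mem (e := (b, a)) hα h

end Greedy

/-- `G` has only the finitely many edges listed in `L`, so their weights have a positive minimum. -/
lemma exists_pos_le_w {L : List (V × V)} (hpos : ∀ a b, G.Adj a b → 0 < G.w a b)
    (hwsymm : ∀ a b, G.w a b = G.w b a) (hL : ∀ e ∈ L, G.Adj e.1 e.2)
    (hall : ∀ a b, G.Adj a b → (a, b) ∈ L ∨ (b, a) ∈ L) :
    ∃ c, 0 < c ∧ ∀ a b, G.Adj a b → c ≤ G.w a b := by
  refine ⟨L.toFinset.inf fun e => G.w e.1 e.2, ?_, fun a b hab => ?_⟩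
  · exact (Finset.lt_inf_iff ENNReal.zero_lt_top).2 fun e he => hpos _ _ (hL e (List.mem_toFinset.1 he))
  · rcases hall a b hab with h | h
    · exact Finset.inf_le (f := fun e : V × V => G.w e.1 e.2) (List.mem_toFinset.2 h)
    · rw [hwsymm]
      exact Finset.inf_le (f := fun e : V × V => G.w e.1 e.2) (List.mem_toFinset.2 h)

end WGraph

open WGraph in
theorem greedy_is_multiplicative_spanner_general {V : Type*} (G : WGraph V)
    (α : ℝ≥0∞) (hα : 1 ≤ α)
    (hpos : ∀ u v : V, G.Adj u v → 0 < G.w u v)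
    (hwsymm : ∀ u v : V, G.w u v = G.w v u)
    (L : List (V × V))
    (hL : ∀ e ∈ L, G.Adj e.1 e.2)
    (hall : ∀ u v : V, G.Adj u v → (u, v) ∈ L ∨ (v, u) ∈ L) :
    ∀ u v : V, (G.greedy α L).dist u v ≤ α * G.dist u v := by
  intro u v
  rcases eq_or_ne u v with rfl | huv
  · simp [dist_self]
  obtain ⟨c, hc_pos, hc_le⟩ := exists_pos_le_w hpos hwsymm hL hall
  exact dist_le_mul_dist (dist_greedy_le_of_adj hα hwsymm hall) (one_pos.trans_le hα).ne'
    (hc_pos.trans_le (le_dist_of_ne hc_le huv)).ne'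

/-- the greedy algorithm, processing all edges of `G` in
non-decreasing order of weight, produces an `α`-multiplicative spanner. -/
theorem greedy_is_multiplicative_spanner {V : Type*} (G : WGraph V)
    (α : ℝ≥0∞) (hα : 1 ≤ α)
    (hpos : ∀ u v : V, G.Adj u v → 0 < G.w u v)
    (hsymm : ∀ u v : V, G.Adj u v → G.Adj v u)
    (hwsymm : ∀ u v : V, G.w u v = G.w v u)
    (L : List (V × V))
    (hL : ∀ e ∈ L, G.Adj e.1 e.2)
    (hall : ∀ u v : V, G.Adj u v → (u, v) ∈ L ∨ (v, u) ∈ L)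
    (hsorted : L.Pairwise fun e f => G.w e.1 e.2 ≤ G.w f.1 f.2) :
    ∀ u v : V, (G.greedy α L).dist u v ≤ α * G.dist u v :=
  greedy_is_multiplicative_spanner_general G α hα hpos hwsymm L hL hall
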